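/- arXiv:1506.02996 — 2 statements merged into one kernel-verified Lean document; each statement's English description precedes it below -/
import Mathlib

section
/- Let ε ≥ 0, α_0 > 0, α_1 > 0, and assume hypotheses (H). There exists a constant C > 0, depending only on P^max, N^max, α_0, α_1, V, ΔΨ_0^pzc, ΔΨ_1^pzc, λ, the interface coefficients (m_u^i, k_u^i, a_u^i, b_u^i)_{i=0,1; u=P,N} and T (and independent of the mesh and of Δt), such that for every mesh, every time step and every solution of the scheme (S) satisfying 0 ≤ P_i^k ≤ P^max and 0 ≤ N_i^k ≤ N^max for all i, k, one has, for u = P and u = N, Σ_{k=0}^{K−1} Σ_{i=0}^{I} Δt (u_{i+1}^{k+1} − u_i^{k+1})²/h_{i+1/2} + (ε_u/2) Σ_{k=0}^{K−1} Σ_{i=1}^{I} h_i (u_i^{k+1} − u_i^k)² ≤ C; in particular ε_u Σ_{k=0}^{K−1} Σ_{i=1}^{I} h_i (u_i^{k+1} − u_i^k)² ≤ 2C. -/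
open MeasureTheory Real Filter Topology

noncomputable section

namespace Corrosion

/-- The Bernoulli function `B(x) = x / (e^x - 1)`, `B(0) = 1`. -/
def Bern (x : ℝ) : ℝ := if x = 0 then 1 else x / (Real.exp x - 1)

/-- The two species: cations `P` and electrons `N`. -/
inductive Sp | P | N

/-- charge numbers: `z_P = 3`, `z_N = -1`. -/
def z : Sp → ℝ
  | Sp.P => 3
  | Sp.N => -1

/-- A mesh of `[0,1]`: edge points `xe 0 = x_{1/2} = 0 < xe 1 = x_{3/2} < … < xe I = x_{I+1/2} = 1`. -/
structure Mesh where
  I : ℕ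
  hI : 1 ≤ I
  xe : ℕ → ℝ
  xe0 : xe 0 = 0
  xeI : xe I = 1
  mono : ∀ j, j < I → xe j < xe (j + 1)

namespace Mesh

variable (m : Mesh)

/-- cell centers `x_i` for `1 ≤ i ≤ I` , with `x_0 = 0` and `x_{I+1} = 1`. -/
def xc (i : ℕ) : ℝ :=
  if i = 0 then 0 else if i = m.I + 1 then 1 else (m.xe (i - 1) + m.xe i) / 2

/-- `h_i = x_{i+1/2} - x_{i-1/2}` for `1 ≤ i ≤ I`. -/
def h (i : ℕ) : ℝ := m.xe i - m.xe (i - 1)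

/-- `h_{i+1/2} = x_{i+1} - x_i` for `0 ≤ i ≤ I`. -/
def hp (i : ℕ) : ℝ := m.xc (i + 1) - m.xc i

/-- mesh size `h = max_{1 ≤ i ≤ I} h_i`. -/
def size : ℝ := (Finset.Icc 1 m.I).sup' ⟨1, Finset.mem_Icc.mpr ⟨le_refl 1, m.hI⟩⟩ m.h

/-- piecewise constant function associated to a vector `(w_i)_{0 ≤ i ≤ I+1}`:
equal to `w i` on `(x_{i-1/2}, x_{i+1/2})`, to `w 0` at `x = 0`, to `w (I+1)` at `x = 1`. -/
def pw (w : ℕ → ℝ) (x : ℝ) : ℝ :=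
  if x = 0 then w 0 else if x = 1 then w (m.I + 1) else w (sInf {i : ℕ | x < m.xe i})

/-- square of the discrete `H¹` norm `‖w_h‖_{1,T}`. -/
def norm1sq (w : ℕ → ℝ) : ℝ :=
  (∑ i ∈ Finset.range (m.I + 1), (w (i + 1) - w i) ^ 2 / m.hp i) + w 0 ^ 2 + w (m.I + 1) ^ 2

/-- square of the discrete `L²` norm `‖w_h‖_0`. -/
def norm0sq (w : ℕ → ℝ) : ℝ := ∑ i ∈ Finset.Icc 1 m.I, m.h i * w i ^ 2

/-- the discrete dual norm `‖w_h‖_{-1,2,T}`. -/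
def normDual (w : ℕ → ℝ) : ℝ :=
  sSup {r : ℝ | ∃ v : ℕ → ℝ, m.norm1sq v ≤ 1 ∧
    r = ∫ x in Set.Ioo (0:ℝ) 1, m.pw w x * m.pw v x}

/-- piecewise constant space derivative: on `(x_i, x_{i+1})` it equals `(w_{i+1} - w_i)/h_{i+1/2}`. -/
def dpw (w : ℕ → ℝ) (x : ℝ) : ℝ :=
  (w (sInf {i : ℕ | x < m.xc (i + 1)} + 1) - w (sInf {i : ℕ | x < m.xc (i + 1)})) /
    m.hp (sInf {i : ℕ | x < m.xc (i + 1)})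

end Mesh

/-- All the data of the corrosion model. -/
structure Data where
  lam : ℝ
  eps : ℝ
  alpha0 : ℝ
  alpha1 : ℝ
  V : ℝ
  rho : ℝ
  dPsi0 : ℝ
  dPsi1 : ℝ
  umax : Sp → ℝ
  m0 : Sp → ℝ
  k0 : Sp → ℝ
  m1 : Sp → ℝ
  k1 : Sp → ℝ
  a0 : Sp → ℝ
  b0 : Sp → ℝ
  a1 : Sp → ℝ
  b1 : Sp → ℝ
  u0 : Sp → ℝ → ℝ
  lam_pos : 0 < lam
  umax_pos : ∀ u, 0 < umax u
  m0_pos : ∀ u, 0 < m0 u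
  k0_pos : ∀ u, 0 < k0 u
  m1_pos : ∀ u, 0 < m1 u
  k1_pos : ∀ u, 0 < k1 u
  a0_mem : ∀ u, a0 u ∈ Set.Icc (0:ℝ) 1
  b0_mem : ∀ u, b0 u ∈ Set.Icc (0:ℝ) 1
  a1_mem : ∀ u, a1 u ∈ Set.Icc (0:ℝ) 1
  b1_mem : ∀ u, b1 u ∈ Set.Icc (0:ℝ) 1
  u0_meas : ∀ u, Measurable (u0 u)

namespace Data
variable (d : Data)

/-- `ε_P = 1`, `ε_N = ε`. -/
def epsu : Sp → ℝ
  | Sp.P => 1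
  | Sp.N => d.eps

def beta0 (u : Sp) (x : ℝ) : ℝ :=
  d.m0 u * Real.exp (-(z u) * d.b0 u * x) + d.k0 u * Real.exp (z u * d.a0 u * x)

def beta1 (u : Sp) (x : ℝ) : ℝ :=
  d.m1 u * Real.exp (-(z u) * d.b1 u * x) + d.k1 u * Real.exp (z u * d.a1 u * x)

def gamma0 (u : Sp) (x : ℝ) : ℝ := d.m0 u * d.umax u * Real.exp (-(z u) * d.b0 u * x)

def gamma1 (u : Sp) (x : ℝ) : ℝ := d.k1 u * d.umax u * Real.exp (z u * d.a1 u * x)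

/-- Hypotheses (H). -/
def HypH : Prop :=
  (3 * d.umax Sp.P - d.umax Sp.N + d.rho = 0) ∧
  (∀ u, ∀ᵐ x ∂(volume.restrict (Set.Ioo (0:ℝ) 1)), 0 ≤ d.u0 u x ∧ d.u0 u x ≤ d.umax u) ∧
  (-(1 / (3 * d.a0 Sp.P)) * (1 + Real.log (d.alpha0 * d.a0 Sp.P * d.k0 Sp.P)) ≤ d.dPsi0 ∧
    d.dPsi0 ≤ (1 / d.a0 Sp.N) * (1 + Real.log (d.alpha0 * d.a0 Sp.N * d.k0 Sp.N))) ∧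
  (-(1 / d.b1 Sp.N) * (1 + Real.log (d.alpha1 * d.b1 Sp.N * d.m1 Sp.N)) ≤ d.dPsi1 ∧
    d.dPsi1 ≤ (1 / (3 * d.b1 Sp.P)) * (1 + Real.log (d.alpha1 * d.b1 Sp.P * d.m1 Sp.P)))

end Data

/-- `dΨ_{i+1/2} = (Ψ_{i+1} - Ψ_i)/h_{i+1/2}`. -/
def dPsiF (m : Mesh) (Psi : ℕ → ℝ) (i : ℕ) : ℝ := (Psi (i + 1) - Psi i) / m.hp i

/-- the Scharfetter-Gummel numerical flux `F_{u,i+1/2}`. -/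
def Flux (m : Mesh) (d : Data) (u : Sp) (Psi w : ℕ → ℝ) (i : ℕ) : ℝ :=
  (Bern (z u * m.hp i * dPsiF m Psi i) * w i -
    Bern (-(z u) * m.hp i * dPsiF m Psi i) * w (i + 1)) / m.hp i

/-- The fully implicit scheme (S), with time step `Δt = T / K`.
`sol u k i` is `u_i^k` (for `u = P, N`) and `Psi k i` is `Ψ_i^k`. -/
def Scheme (m : Mesh) (d : Data) (T : ℝ) (K : ℕ)
    (sol : Sp → ℕ → ℕ → ℝ) (Psi : ℕ → ℕ → ℝ) : Prop :=
  (∀ u i, 1 ≤ i → i ≤ m.I →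
    sol u 0 i = (1 / m.h i) * ∫ x in Set.Ioo (m.xe (i - 1)) (m.xe i), d.u0 u x) ∧
  (∀ k, k < K → ∀ i, 1 ≤ i → i ≤ m.I →
    -(d.lam ^ 2) * (dPsiF m (Psi (k + 1)) i - dPsiF m (Psi (k + 1)) (i - 1)) =
      m.h i * (3 * sol Sp.P (k + 1) i - sol Sp.N (k + 1) i + d.rho)) ∧
  (∀ u k, k < K → ∀ i, 1 ≤ i → i ≤ m.I →
    d.epsu u * m.h i * (sol u (k + 1) i - sol u k i) / (T / K) +
      Flux m d u (Psi (k + 1)) (sol u (k + 1)) i -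
      Flux m d u (Psi (k + 1)) (sol u (k + 1)) (i - 1) = 0) ∧
  (∀ k, k < K → Psi (k + 1) 0 - d.alpha0 * dPsiF m (Psi (k + 1)) 0 = d.dPsi0) ∧
  (∀ k, k < K →
    Psi (k + 1) (m.I + 1) + d.alpha1 * dPsiF m (Psi (k + 1)) m.I = d.V - d.dPsi1) ∧
  (∀ u k, k < K →
    -(Flux m d u (Psi (k + 1)) (sol u (k + 1)) 0) =
      d.beta0 u (Psi (k + 1) 0) * sol u (k + 1) 0 - d.gamma0 u (Psi (k + 1) 0)) ∧
  (∀ u k, k < K →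
    Flux m d u (Psi (k + 1)) (sol u (k + 1)) m.I =
      d.beta1 u (d.V - Psi (k + 1) (m.I + 1)) * sol u (k + 1) (m.I + 1) -
      d.gamma1 u (d.V - Psi (k + 1) (m.I + 1)))

/-- The stability property `0 ≤ u_i^k ≤ u^max` for all `i, k`. -/
def Stable (m : Mesh) (d : Data) (K : ℕ) (sol : Sp → ℕ → ℕ → ℝ) : Prop :=
  ∀ u k, k ≤ K → ∀ i, i ≤ m.I + 1 → 0 ≤ sol u k i ∧ sol u k i ≤ d.umax u

/-- the approximate space-time solution `w_{h,Δt}`, equal to the piecewise constant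
function built on `w^{k+1}` for `t ∈ [t^k, t^{k+1})`, with `Δt = T/K`. -/
def apx (m : Mesh) (T : ℝ) (K : ℕ) (w : ℕ → ℕ → ℝ) (x t : ℝ) : ℝ :=
  m.pw (w (Nat.floor (t / (T / K)) + 1)) x

/-- the discrete space derivative `∂_{x,T} w_{h,Δt}`. -/
def dapx (m : Mesh) (T : ℝ) (K : ℕ) (w : ℕ → ℕ → ℝ) (x t : ℝ) : ℝ :=
  m.dpw (w (Nat.floor (t / (T / K)) + 1)) x


/-- hyperbolic cotangent `coth y = cosh y / sinh y`. -/
def coth (x : ℝ) : ℝ := Real.cosh x / Real.sinh x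

/-- approximate trace at `x = 0`: `t ∈ [t^k, t^{k+1}) ↦ w_0^{k+1}`. -/
def trace0 (T : ℝ) (K : ℕ) (w : ℕ → ℕ → ℝ) (t : ℝ) : ℝ :=
  w (Nat.floor (t / (T / K)) + 1) 0

/-- approximate trace at `x = 1`: `t ∈ [t^k, t^{k+1}) ↦ w_{I+1}^{k+1}`. -/
def trace1 (m : Mesh) (T : ℝ) (K : ℕ) (w : ℕ → ℕ → ℝ) (t : ℝ) : ℝ :=
  w (Nat.floor (t / (T / K)) + 1) (m.I + 1)

/-- the measure on `(0,1) × (0,T)` (space × time). -/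
def stMeasure (T : ℝ) : MeasureTheory.Measure (ℝ × ℝ) :=
  (MeasureTheory.volume.restrict (Set.Ioo (0:ℝ) 1)).prod
    (MeasureTheory.volume.restrict (Set.Ioo (0:ℝ) T))

end Corrosion

/-!
Test the equation for `u` at step `k + 1` against `u^{k+1}` itself. Summation by parts turns the
flux terms into `∑ -F_{i+1/2} (u_{i+1} - u_i)`, and `B(-x) = B(x) + x` splits each of them into a
diffusive part `B(z h dΨ) (u_{i+1} - u_i)² / h_{i+1/2}` and a drift part. Because the densities
are bounded, the discrete Poisson equation with its Robin conditions bounds `dΨ` by a constant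
`M` independent of the mesh, so `B ≥ exp (-3M)` and Young's inequality absorbs the drift. The
boundary fluxes are bounded since the `β`-terms have a sign, and the time difference splits as
`ε/2 (‖u^{k+1}‖² - ‖u^k‖²) + ε/2 ‖u^{k+1} - u^k‖²`, which telescopes when summed over `k`.
-/

namespace Corrosion

lemma Bern_neg (x : ℝ) : Bern (-x) = Bern x + x := by
  rcases eq_or_ne x 0 with rfl | hx
  · simp [Bern]
  have hexp : exp x - 1 ≠ 0 := sub_ne_zero.mpr (by simpa using hx)
  have hexp' : 1 - exp x ≠ 0 := fun h => hexp (by linarith)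
  simp only [Bern, if_neg hx, if_neg (neg_ne_zero.mpr hx), exp_neg]
  field_simp
  ring

lemma exp_neg_abs_le_Bern (x : ℝ) : exp (-|x|) ≤ Bern x := by
  rcases lt_trichotomy x 0 with hx | rfl | hx
  · have hden : exp x - 1 < 0 := by linarith [exp_lt_one_iff.mpr hx]
    calc exp (-|x|) ≤ 1 := exp_le_one_iff.mpr (neg_nonpos.mpr (abs_nonneg x))
      _ ≤ x / (exp x - 1) := by rw [le_div_iff_of_neg hden]; linarith [add_one_le_exp x]
      _ = Bern x := by rw [Bern, if_neg hx.ne]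
  · simp [Bern]
  · have hden : 0 < exp x - 1 := by linarith [one_lt_exp_iff.mpr hx]
    have hkey : exp (-x) * (exp x - 1) ≤ x := by
      rw [mul_sub, ← exp_add, neg_add_cancel, exp_zero, mul_one]
      linarith [add_one_le_exp (-x)]
    rw [abs_of_pos hx, Bern, if_neg hx.ne', le_div_iff₀ hden]
    exact hkey

lemma abs_z_le (u : Sp) : |z u| ≤ 3 := by
  cases u <;> norm_num [z]

lemma Data.epsu_nonneg (d : Data) (heps : 0 ≤ d.eps) (u : Sp) : 0 ≤ d.epsu u := by
  cases u
  · exact zero_le_one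
  · exact heps

lemma sum_Icc_one_eq_sum_range {M : Type*} [AddCommMonoid M] (f : ℕ → M) (n : ℕ) :
    ∑ i ∈ Finset.Icc 1 n, f i = ∑ i ∈ Finset.range n, f (i + 1) := by
  rw [← Finset.Ico_add_one_right_eq_Icc, Finset.sum_Ico_eq_sum_range]
  simp [add_comm]

lemma sum_Icc_sub_mul_eq {R : Type*} [CommRing R] (F w : ℕ → R) (n : ℕ) :
    ∑ i ∈ Finset.Icc 1 n, (F i - F (i - 1)) * w i
      = F n * w (n + 1) - F 0 * w 0 - ∑ i ∈ Finset.range (n + 1), F i * (w (i + 1) - w i) := by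
  induction n with
  | zero => simp; ring
  | succ n ih =>
    rw [Finset.sum_Icc_succ_top (Nat.le_add_left 1 n), ih, Finset.sum_range_succ _ (n + 1),
      Nat.add_sub_cancel]
    ring

namespace Mesh

variable (m : Mesh)

lemma xe_lt {j k : ℕ} (h : j < k) (hk : k ≤ m.I) : m.xe j < m.xe k := by
  induction k with
  | zero => omega
  | succ n ih =>
    rcases Nat.lt_succ_iff_lt_or_eq.mp h with h' | rfl
    · exact (ih h' (by omega)).trans (m.mono n (by omega))
    · exact m.mono j (by omega)

lemma h_pos {i : ℕ} (h1 : 1 ≤ i) (h2 : i ≤ m.I) : 0 < m.h i :=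
  sub_pos.mpr (m.xe_lt (by omega) h2)

lemma xc_eq {i : ℕ} (h1 : 1 ≤ i) (h2 : i ≤ m.I) : m.xc i = (m.xe (i - 1) + m.xe i) / 2 := by
  rw [xc, if_neg (by omega), if_neg (by omega)]

lemma hp_pos {i : ℕ} (hi : i ≤ m.I) : 0 < m.hp i := by
  have hI := m.hI
  rw [hp]
  rcases Nat.eq_zero_or_pos i with rfl | h1
  · rw [m.xc_eq le_rfl hI, xc, if_pos rfl, Nat.sub_self]
    linarith [m.mono 0 hI, m.xe0]
  rcases hi.lt_or_eq with h2 | rfl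
  · rw [m.xc_eq h1 h2.le, m.xc_eq (by omega) h2, Nat.succ_sub_one]
    linarith [m.xe_lt (j := i - 1) (k := i + 1) (by omega) h2]
  · rw [m.xc_eq h1 le_rfl, xc, if_neg (by omega), if_pos rfl]
    linarith [m.xe_lt (j := m.I - 1) (k := m.I) (by omega) le_rfl, m.xeI]

lemma sum_hp : ∑ i ∈ Finset.range (m.I + 1), m.hp i = 1 := by
  simp only [hp]
  rw [Finset.sum_range_sub m.xc, xc, if_neg (by omega), if_pos rfl, xc, if_pos rfl, sub_zero]

lemma hp_le_one {i : ℕ} (hi : i ≤ m.I) : m.hp i ≤ 1 := by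
  rw [← m.sum_hp]
  exact Finset.single_le_sum (fun j hj => (m.hp_pos (Finset.mem_range_succ_iff.mp hj)).le)
    (Finset.mem_range_succ_iff.mpr hi)

lemma sum_h_succ : ∑ i ∈ Finset.range m.I, m.h (i + 1) = 1 := by
  simp only [h, Nat.add_sub_cancel]
  rw [Finset.sum_range_sub m.xe, m.xeI, m.xe0, sub_zero]

lemma sum_h : ∑ i ∈ Finset.Icc 1 m.I, m.h i = 1 := by
  rw [sum_Icc_one_eq_sum_range, m.sum_h_succ]

lemma norm0sq_nonneg (w : ℕ → ℝ) : 0 ≤ m.norm0sq w :=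
  Finset.sum_nonneg fun _ hi =>
    mul_nonneg (m.h_pos (Finset.mem_Icc.mp hi).1 (Finset.mem_Icc.mp hi).2).le (sq_nonneg _)

lemma norm0sq_le {w : ℕ → ℝ} {W : ℝ} (hw : ∀ i, 1 ≤ i → i ≤ m.I → 0 ≤ w i ∧ w i ≤ W) :
    m.norm0sq w ≤ W ^ 2 := by
  calc m.norm0sq w ≤ ∑ i ∈ Finset.Icc 1 m.I, m.h i * W ^ 2 := by
        refine Finset.sum_le_sum fun i hi => ?_
        obtain ⟨h1, h2⟩ := Finset.mem_Icc.mp hi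
        obtain ⟨hw0, hwW⟩ := hw i h1 h2
        have := (m.h_pos h1 h2).le
        gcongr
    _ = W ^ 2 := by rw [← Finset.sum_mul, m.sum_h, one_mul]

end Mesh

lemma half_mul_sq_div_sub_le {b c p s a δ : ℝ} (hp : 0 < p) (hc : 0 < c) (hcb : c ≤ b)
    (hs : |s| ≤ a) :
    c / 2 * δ ^ 2 / p - a ^ 2 / (2 * c) * p ≤ b * δ ^ 2 / p + s * δ := by
  have hsδ : -(a * |δ|) ≤ s * δ := by
    have : |s * δ| ≤ a * |δ| := by rw [abs_mul]; gcongr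
    linarith [neg_abs_le (s * δ)]
  have hyoung : a * |δ| ≤ c / 2 * δ ^ 2 / p + a ^ 2 / (2 * c) * p := by
    have hsq : 0 ≤ (c * |δ| - a * p) ^ 2 / (2 * c * p) := by positivity
    have hid : (c * |δ| - a * p) ^ 2 / (2 * c * p)
        = c / 2 * δ ^ 2 / p + a ^ 2 / (2 * c) * p - a * |δ| := by
      field_simp
      rw [← sq_abs δ]
      ring
    linarith
  have hb : 2 * (c / 2 * δ ^ 2 / p) ≤ b * δ ^ 2 / p := by
    rw [show 2 * (c / 2 * δ ^ 2 / p) = c * δ ^ 2 / p by ring]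
    gcongr
  linarith

lemma neg_Flux_mul_sub (m : Mesh) (d : Data) (u : Sp) (Psi w : ℕ → ℝ) {i : ℕ} (hi : i ≤ m.I) :
    -Flux m d u Psi w i * (w (i + 1) - w i)
      = Bern (z u * m.hp i * dPsiF m Psi i) * (w (i + 1) - w i) ^ 2 / m.hp i
        + z u * dPsiF m Psi i * w (i + 1) * (w (i + 1) - w i) := by
  have hne := (m.hp_pos hi).ne'
  rw [Flux, show -z u * m.hp i * dPsiF m Psi i = -(z u * m.hp i * dPsiF m Psi i) by ring,
    Bern_neg]
  field_simp
  ring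

lemma abs_mul_mul_le {x y w X Y W : ℝ} (hx : |x| ≤ X) (hy : |y| ≤ Y) (hw : |w| ≤ W) :
    |x * y * w| ≤ X * Y * W := by
  rw [abs_mul, abs_mul]
  have := (abs_nonneg x).trans hx
  have := (abs_nonneg y).trans hy
  gcongr

lemma sum_neg_Flux_mul_sub_ge (m : Mesh) (d : Data) (u : Sp) (Psi w : ℕ → ℝ) {M W : ℝ}
    (hM : ∀ i ≤ m.I, |dPsiF m Psi i| ≤ M) (hw : ∀ i ≤ m.I + 1, 0 ≤ w i ∧ w i ≤ W) :
    exp (-(3 * M)) / 2 * ∑ i ∈ Finset.range (m.I + 1), (w (i + 1) - w i) ^ 2 / m.hp i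
        - (3 * M * W) ^ 2 / (2 * exp (-(3 * M)))
      ≤ ∑ i ∈ Finset.range (m.I + 1), -Flux m d u Psi w i * (w (i + 1) - w i) := by
  have hterm : ∀ i ∈ Finset.range (m.I + 1),
      exp (-(3 * M)) / 2 * (w (i + 1) - w i) ^ 2 / m.hp i
          - (3 * M * W) ^ 2 / (2 * exp (-(3 * M))) * m.hp i
        ≤ -Flux m d u Psi w i * (w (i + 1) - w i) := by
    intro i hi
    have hiI := Finset.mem_range_succ_iff.mp hi
    have hp := m.hp_pos hiI
    have hBern : exp (-(3 * M)) ≤ Bern (z u * m.hp i * dPsiF m Psi i) := by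
      refine le_trans (exp_le_exp.mpr ?_) (exp_neg_abs_le_Bern _)
      have := abs_mul_mul_le (abs_z_le u) ((abs_of_pos hp).trans_le (m.hp_le_one hiI))
        (hM i hiI)
      linarith
    obtain ⟨hw0, hwW⟩ := hw (i + 1) (by omega)
    rw [neg_Flux_mul_sub m d u Psi w hiI]
    exact half_mul_sq_div_sub_le hp (exp_pos _) hBern
      (abs_mul_mul_le (abs_z_le u) (hM i hiI) (by rwa [abs_of_nonneg hw0]))
  calc _ = ∑ i ∈ Finset.range (m.I + 1),
        (exp (-(3 * M)) / 2 * (w (i + 1) - w i) ^ 2 / m.hp i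
          - (3 * M * W) ^ 2 / (2 * exp (-(3 * M))) * m.hp i) := by
        rw [Finset.sum_sub_distrib, ← Finset.mul_sum, m.sum_hp, mul_one, Finset.mul_sum]
        simp only [mul_div_assoc]
    _ ≤ _ := Finset.sum_le_sum hterm

lemma Mesh.time_step_energy_eq (m : Mesh) (F w w' : ℕ → ℝ) {ε τ : ℝ} (hτ : τ ≠ 0)
    (hsch : ∀ i, 1 ≤ i → i ≤ m.I → ε * m.h i * (w i - w' i) / τ + F i - F (i - 1) = 0) :
    τ * ∑ i ∈ Finset.range (m.I + 1), -F i * (w (i + 1) - w i) + ε / 2 * m.norm0sq (w - w')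
      = τ * (F 0 * w 0 - F m.I * w (m.I + 1)) + (ε / 2 * m.norm0sq w' - ε / 2 * m.norm0sq w) := by
  -- `2 (a - b) a = a² - b² + (a - b)²` turns the time difference into a telescoping energy
  have htime : τ * ∑ i ∈ Finset.Icc 1 m.I, (F i - F (i - 1)) * w i
      = -(ε / 2) * (m.norm0sq w - m.norm0sq w' + m.norm0sq (w - w')) := by
    simp only [Mesh.norm0sq, Pi.sub_apply, ← Finset.sum_sub_distrib, ← Finset.sum_add_distrib,
      Finset.mul_sum]
    refine Finset.sum_congr rfl fun i hi => ?_
    obtain ⟨h1, h2⟩ := Finset.mem_Icc.mp hi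
    rw [show F i - F (i - 1) = -(ε * m.h i * (w i - w' i) / τ) by linarith [hsch i h1 h2]]
    field_simp
    ring
  rw [sum_Icc_sub_mul_eq] at htime
  simp only [neg_mul, Finset.sum_neg_distrib]
  linear_combination htime

lemma mul_le_of_neg_eq_sub_mul {F β γ Γ x X : ℝ} (hF : -F = β * x - γ) (hβ : 0 ≤ β)
    (hγ0 : 0 ≤ γ) (hγ : γ ≤ Γ) (hx0 : 0 ≤ x) (hxX : x ≤ X) : F * x ≤ Γ * X :=
  calc F * x = γ * x - β * (x * x) := by linear_combination (-x) * hF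
    _ ≤ γ * x := sub_le_self _ (by positivity)
    _ ≤ Γ * X := mul_le_mul hγ hxX hx0 (hγ0.trans hγ)

namespace Data

variable (d : Data) (u : Sp)

lemma beta0_nonneg (x : ℝ) : 0 ≤ d.beta0 u x := by
  have := d.m0_pos u
  have := d.k0_pos u
  unfold beta0
  positivity

lemma beta1_nonneg (x : ℝ) : 0 ≤ d.beta1 u x := by
  have := d.m1_pos u
  have := d.k1_pos u
  unfold beta1
  positivity

lemma gamma0_nonneg (x : ℝ) : 0 ≤ d.gamma0 u x := by
  have := d.m0_pos u
  have := d.umax_pos u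
  unfold gamma0
  positivity

lemma gamma1_nonneg (x : ℝ) : 0 ≤ d.gamma1 u x := by
  have := d.k1_pos u
  have := d.umax_pos u
  unfold gamma1
  positivity

lemma gamma0_le {x B : ℝ} (hx : |x| ≤ B) :
    d.gamma0 u x ≤ d.m0 u * d.umax u * exp (3 * B) := by
  have := d.m0_pos u
  have := d.umax_pos u
  have hb : |d.b0 u| ≤ 1 := abs_le.mpr ⟨by linarith [(d.b0_mem u).1], (d.b0_mem u).2⟩
  have := abs_mul_mul_le ((abs_neg (z u)).trans_le (abs_z_le u)) hb hx
  unfold gamma0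
  refine mul_le_mul_of_nonneg_left (exp_le_exp.mpr ?_) (by positivity)
  linarith [le_abs_self (-z u * d.b0 u * x)]

lemma gamma1_le {x B : ℝ} (hx : |x| ≤ B) :
    d.gamma1 u x ≤ d.k1 u * d.umax u * exp (3 * B) := by
  have := d.k1_pos u
  have := d.umax_pos u
  have ha : |d.a1 u| ≤ 1 := abs_le.mpr ⟨by linarith [(d.a1_mem u).1], (d.a1_mem u).2⟩
  have := abs_mul_mul_le (abs_z_le u) ha hx
  unfold gamma1
  refine mul_le_mul_of_nonneg_left (exp_le_exp.mpr ?_) (by positivity)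
  linarith [le_abs_self (z u * d.a1 u * x)]

end Data

lemma abs_add_mul_le {a α s M : ℝ} (hα : 0 ≤ α) (hs : |s| ≤ M) : |a + α * s| ≤ |a| + α * M := by
  calc |a + α * s| ≤ |a| + |α| * |s| := by rw [← abs_mul]; exact abs_add_le _ _
    _ ≤ |a| + α * M := by rw [abs_of_nonneg hα]; gcongr

lemma Flux_zero_mul_le (m : Mesh) (d : Data) (u : Sp) (Psi w : ℕ → ℝ) {M : ℝ}
    (ha0 : 0 ≤ d.alpha0) (hM : |dPsiF m Psi 0| ≤ M)
    (hbc : Psi 0 - d.alpha0 * dPsiF m Psi 0 = d.dPsi0)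
    (hF : -Flux m d u Psi w 0 = d.beta0 u (Psi 0) * w 0 - d.gamma0 u (Psi 0))
    (hw : 0 ≤ w 0 ∧ w 0 ≤ d.umax u) :
    Flux m d u Psi w 0 * w 0
      ≤ d.m0 u * d.umax u * exp (3 * (|d.dPsi0| + d.alpha0 * M)) * d.umax u := by
  have hPsi : |Psi 0| ≤ |d.dPsi0| + d.alpha0 * M := by
    rw [show Psi 0 = d.dPsi0 + d.alpha0 * dPsiF m Psi 0 by linarith]
    exact abs_add_mul_le ha0 hM
  exact mul_le_of_neg_eq_sub_mul hF (d.beta0_nonneg u _) (d.gamma0_nonneg u _)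
    (d.gamma0_le u hPsi) hw.1 hw.2

lemma neg_Flux_last_mul_le (m : Mesh) (d : Data) (u : Sp) (Psi w : ℕ → ℝ) {M : ℝ}
    (ha1 : 0 ≤ d.alpha1) (hM : |dPsiF m Psi m.I| ≤ M)
    (hbc : Psi (m.I + 1) + d.alpha1 * dPsiF m Psi m.I = d.V - d.dPsi1)
    (hF : Flux m d u Psi w m.I
      = d.beta1 u (d.V - Psi (m.I + 1)) * w (m.I + 1) - d.gamma1 u (d.V - Psi (m.I + 1)))
    (hw : 0 ≤ w (m.I + 1) ∧ w (m.I + 1) ≤ d.umax u) :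
    -Flux m d u Psi w m.I * w (m.I + 1)
      ≤ d.k1 u * d.umax u * exp (3 * (|d.dPsi1| + d.alpha1 * M)) * d.umax u := by
  have hPsi : |d.V - Psi (m.I + 1)| ≤ |d.dPsi1| + d.alpha1 * M := by
    rw [show d.V - Psi (m.I + 1) = d.dPsi1 + d.alpha1 * dPsiF m Psi m.I by linarith]
    exact abs_add_mul_le ha1 hM
  exact mul_le_of_neg_eq_sub_mul (by rw [neg_neg]; exact hF) (d.beta1_nonneg u _)
    (d.gamma1_nonneg u _) (d.gamma1_le u hPsi) hw.1 hw.2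

section Poisson

variable (m : Mesh) (Psi ρ : ℕ → ℝ) {lam R : ℝ}

lemma sub_eq_sum_hp_mul_dPsiF :
    Psi (m.I + 1) - Psi 0 = ∑ i ∈ Finset.range (m.I + 1), m.hp i * dPsiF m Psi i := by
  rw [← Finset.sum_range_sub]
  refine Finset.sum_congr rfl fun i hi => ?_
  have := (m.hp_pos (Finset.mem_range_succ_iff.mp hi)).ne'
  rw [dPsiF]
  field_simp

/-- Discrete Gauss law: the field varies by at most the total charge over the interval. -/
lemma abs_dPsiF_sub_le (hlam : 0 < lam) (hρ : ∀ i, 1 ≤ i → i ≤ m.I → |ρ i| ≤ R)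
    (hpois : ∀ i, 1 ≤ i → i ≤ m.I →
      -(lam ^ 2) * (dPsiF m Psi i - dPsiF m Psi (i - 1)) = m.h i * ρ i)
    {i : ℕ} (hi : i ≤ m.I) : |dPsiF m Psi i - dPsiF m Psi 0| ≤ R / lam ^ 2 := by
  have hR : 0 ≤ R := (abs_nonneg _).trans (hρ 1 le_rfl m.hI)
  have hstep : ∀ j < m.I,
      |dPsiF m Psi (j + 1) - dPsiF m Psi j| ≤ m.h (j + 1) * (R / lam ^ 2) := by
    intro j hj
    have hh := m.h_pos (i := j + 1) (by omega) hj
    have hpj := hpois (j + 1) (by omega) hj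
    rw [Nat.add_sub_cancel] at hpj
    rw [show dPsiF m Psi (j + 1) - dPsiF m Psi j = -(m.h (j + 1) * ρ (j + 1)) / lam ^ 2 by
      field_simp; linarith]
    rw [abs_div, abs_neg, abs_mul, abs_of_pos hh, abs_of_pos (pow_pos hlam 2), mul_div_assoc]
    exact mul_le_mul_of_nonneg_left
      (div_le_div_of_nonneg_right (hρ (j + 1) (by omega) hj) (by positivity)) hh.le
  rw [← Finset.sum_range_sub]
  calc |∑ j ∈ Finset.range i, (dPsiF m Psi (j + 1) - dPsiF m Psi j)|
      ≤ ∑ j ∈ Finset.range i, m.h (j + 1) * (R / lam ^ 2) :=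
        (Finset.abs_sum_le_sum_abs _ _).trans <| Finset.sum_le_sum fun j hj =>
          hstep j (by have := Finset.mem_range.mp hj; omega)
    _ ≤ ∑ j ∈ Finset.range m.I, m.h (j + 1) * (R / lam ^ 2) :=
        Finset.sum_le_sum_of_subset_of_nonneg (Finset.range_subset_range.mpr hi)
          fun j hj _ => by
            have := m.h_pos (i := j + 1) (by omega) (Finset.mem_range.mp hj)
            positivity
    _ = R / lam ^ 2 := by rw [← Finset.sum_mul, m.sum_h_succ, one_mul]

lemma abs_sum_hp_mul_sub_le {S : ℕ → ℝ} {δ : ℝ} (hS : ∀ i ≤ m.I, |S i - S 0| ≤ δ) :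
    |∑ i ∈ Finset.range (m.I + 1), m.hp i * S i - S 0| ≤ δ := by
  have hsplit : ∑ i ∈ Finset.range (m.I + 1), m.hp i * S i - S 0
      = ∑ i ∈ Finset.range (m.I + 1), m.hp i * (S i - S 0) := by
    simp only [mul_sub, Finset.sum_sub_distrib, ← Finset.sum_mul, m.sum_hp, one_mul]
  rw [hsplit]
  calc |∑ i ∈ Finset.range (m.I + 1), m.hp i * (S i - S 0)|
      ≤ ∑ i ∈ Finset.range (m.I + 1), m.hp i * δ :=
        (Finset.abs_sum_le_sum_abs _ _).trans <| Finset.sum_le_sum fun i hi => by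
          have hi := Finset.mem_range_succ_iff.mp hi
          rw [abs_mul, abs_of_pos (m.hp_pos hi)]
          exact mul_le_mul_of_nonneg_left (hS i hi) (m.hp_pos hi).le
    _ = δ := by rw [← Finset.sum_mul, m.sum_hp, one_mul]

/-- The Robin conditions pin the mean of the field, whose oscillation is controlled by the
Gauss law. -/
lemma abs_dPsiF_le {α0 α1 A0 A1 : ℝ} (hlam : 0 < lam) (hα0 : 0 ≤ α0) (hα1 : 0 ≤ α1)
    (hρ : ∀ i, 1 ≤ i → i ≤ m.I → |ρ i| ≤ R)
    (hpois : ∀ i, 1 ≤ i → i ≤ m.I →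
      -(lam ^ 2) * (dPsiF m Psi i - dPsiF m Psi (i - 1)) = m.h i * ρ i)
    (hbc0 : Psi 0 - α0 * dPsiF m Psi 0 = A0)
    (hbc1 : Psi (m.I + 1) + α1 * dPsiF m Psi m.I = A1)
    {i : ℕ} (hi : i ≤ m.I) : |dPsiF m Psi i| ≤ |A1 - A0| + (2 + α1) * (R / lam ^ 2) := by
  set S := dPsiF m Psi
  set δ := R / lam ^ 2
  have hdev : ∀ j ≤ m.I, |S j - S 0| ≤ δ := fun j hj => abs_dPsiF_sub_le m Psi ρ hlam hρ hpois hj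
  have hmean := abs_sum_hp_mul_sub_le m hdev
  have hS0 : (1 + α0 + α1) * S 0
      = (A1 - A0) - α1 * (S m.I - S 0)
        - (∑ j ∈ Finset.range (m.I + 1), m.hp j * S j - S 0) := by
    linear_combination hbc1 - hbc0 - sub_eq_sum_hp_mul_dPsiF m Psi
  have hS0_le : |S 0| ≤ |A1 - A0| + α1 * δ + δ :=
    calc |S 0| ≤ (1 + α0 + α1) * |S 0| := le_mul_of_one_le_left (abs_nonneg _) (by linarith)
      _ = |(A1 - A0) - α1 * (S m.I - S 0)
            - (∑ j ∈ Finset.range (m.I + 1), m.hp j * S j - S 0)| := by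
          rw [← hS0, abs_mul, abs_of_pos (show 0 < 1 + α0 + α1 by linarith)]
      _ ≤ |A1 - A0| + |α1 * (S m.I - S 0)|
            + |∑ j ∈ Finset.range (m.I + 1), m.hp j * S j - S 0| :=
          (abs_sub _ _).trans (add_le_add_left (abs_sub _ _) _)
      _ ≤ |A1 - A0| + α1 * δ + δ := by
          rw [abs_mul, abs_of_nonneg hα1]
          gcongr
          exact hdev m.I le_rfl
  calc |S i| = |S 0 + (S i - S 0)| := by rw [add_sub_cancel]
    _ ≤ |S 0| + |S i - S 0| := abs_add_le _ _
    _ ≤ |A1 - A0| + (2 + α1) * δ := by linarith [hdev i hi]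

end Poisson

def Mesh.seminorm1sq (m : Mesh) (w : ℕ → ℝ) : ℝ :=
  ∑ i ∈ Finset.range (m.I + 1), (w (i + 1) - w i) ^ 2 / m.hp i

namespace Data

variable (d : Data)

def chargeBound : ℝ := 3 * d.umax Sp.P + d.umax Sp.N + |d.rho|

def gradBound : ℝ := |d.V - d.dPsi1 - d.dPsi0| + (2 + d.alpha1) * (d.chargeBound / d.lam ^ 2)

/-- Young's-inequality price of the drift term, `exp (-3 M)` bounding the Bernoulli factor
from below. -/
def driftBound (u : Sp) : ℝ :=
  (3 * d.gradBound * d.umax u) ^ 2 / (2 * exp (-(3 * d.gradBound)))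

def boundaryBound (u : Sp) : ℝ :=
  d.m0 u * d.umax u * exp (3 * (|d.dPsi0| + d.alpha0 * d.gradBound)) * d.umax u
    + d.k1 u * d.umax u * exp (3 * (|d.dPsi1| + d.alpha1 * d.gradBound)) * d.umax u

def energyBound (T : ℝ) (u : Sp) : ℝ :=
  T * (d.driftBound u + d.boundaryBound u) + d.epsu u / 2 * d.umax u ^ 2

def estimateBound (T : ℝ) (u : Sp) : ℝ :=
  (2 / exp (-(3 * d.gradBound)) + 1) * d.energyBound T u

lemma estimateBound_pos (heps : 0 ≤ d.eps) {T : ℝ} (hT : 0 < T) (u : Sp) :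
    0 < d.estimateBound T u := by
  have := d.umax_pos u
  have := d.m0_pos u
  have := d.k1_pos u
  have := d.epsu_nonneg heps u
  unfold estimateBound energyBound driftBound boundaryBound
  positivity

lemma abs_charge_le {P N : ℝ} (hP : 0 ≤ P ∧ P ≤ d.umax Sp.P) (hN : 0 ≤ N ∧ N ≤ d.umax Sp.N) :
    |3 * P - N + d.rho| ≤ d.chargeBound := by
  rw [chargeBound, abs_le]
  constructor <;> linarith [le_abs_self d.rho, neg_abs_le d.rho]

end Data

lemma energy_step_le (m : Mesh) (d : Data) (u : Sp) (Psi w w' : ℕ → ℝ) {τ : ℝ}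
    (hτ : 0 < τ) (ha0 : 0 ≤ d.alpha0) (ha1 : 0 ≤ d.alpha1)
    (hM : ∀ i ≤ m.I, |dPsiF m Psi i| ≤ d.gradBound)
    (hw : ∀ i ≤ m.I + 1, 0 ≤ w i ∧ w i ≤ d.umax u)
    (hsch : ∀ i, 1 ≤ i → i ≤ m.I →
      d.epsu u * m.h i * (w i - w' i) / τ + Flux m d u Psi w i - Flux m d u Psi w (i - 1) = 0)
    (hbc0 : Psi 0 - d.alpha0 * dPsiF m Psi 0 = d.dPsi0)
    (hbc1 : Psi (m.I + 1) + d.alpha1 * dPsiF m Psi m.I = d.V - d.dPsi1)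
    (hF0 : -Flux m d u Psi w 0 = d.beta0 u (Psi 0) * w 0 - d.gamma0 u (Psi 0))
    (hF1 : Flux m d u Psi w m.I
      = d.beta1 u (d.V - Psi (m.I + 1)) * w (m.I + 1) - d.gamma1 u (d.V - Psi (m.I + 1))) :
    τ * (exp (-(3 * d.gradBound)) / 2 * m.seminorm1sq w) + d.epsu u / 2 * m.norm0sq (w - w')
      ≤ τ * (d.driftBound u + d.boundaryBound u)
        + (d.epsu u / 2 * m.norm0sq w' - d.epsu u / 2 * m.norm0sq w) := by
  have henergy := m.time_step_energy_eq _ w w' hτ.ne' hsch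
  have hdrift := sum_neg_Flux_mul_sub_ge m d u Psi w hM hw
  have hleft := Flux_zero_mul_le m d u Psi w ha0 (hM 0 (Nat.zero_le _)) hbc0 hF0 (hw 0 (by omega))
  have hright := neg_Flux_last_mul_le m d u Psi w ha1 (hM m.I le_rfl) hbc1 hF1 (hw _ le_rfl)
  have hbdry : τ * (Flux m d u Psi w 0 * w 0 - Flux m d u Psi w m.I * w (m.I + 1))
      ≤ τ * d.boundaryBound u :=
    mul_le_mul_of_nonneg_left (by rw [Data.boundaryBound]; linarith) hτ.le
  have hτdrift := mul_le_mul_of_nonneg_left hdrift hτ.le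
  rw [mul_sub] at hτdrift
  rw [mul_add, Data.driftBound, Mesh.seminorm1sq]
  linarith

lemma sum_range_le_of_le_sub {a f : ℕ → ℝ} {b : ℝ} {K : ℕ}
    (h : ∀ k < K, a k ≤ b + (f k - f (k + 1))) :
    ∑ k ∈ Finset.range K, a k ≤ K * b + (f 0 - f K) := by
  calc ∑ k ∈ Finset.range K, a k ≤ ∑ k ∈ Finset.range K, (b + (f k - f (k + 1))) :=
        Finset.sum_le_sum fun k hk => h k (Finset.mem_range.mp hk)
    _ = K * b + (f 0 - f K) := by
        rw [Finset.sum_add_distrib, Finset.sum_range_sub', Finset.sum_const, Finset.card_range,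
          nsmul_eq_mul]

lemma energy_sum_le (d : Data) (heps : 0 ≤ d.eps) (ha0 : 0 ≤ d.alpha0) (ha1 : 0 ≤ d.alpha1)
    {T : ℝ} (hT : 0 < T) {K : ℕ} (hK : 1 ≤ K) {m : Mesh} {sol : Sp → ℕ → ℕ → ℝ}
    {Psi : ℕ → ℕ → ℝ} (hS : Scheme m d T K sol Psi) (hSt : Stable m d K sol) (u : Sp) :
    exp (-(3 * d.gradBound)) / 2 * ∑ k ∈ Finset.range K, ∑ i ∈ Finset.range (m.I + 1),
          T / K * (sol u (k + 1) (i + 1) - sol u (k + 1) i) ^ 2 / m.hp i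
        + d.epsu u / 2 * ∑ k ∈ Finset.range K, ∑ i ∈ Finset.Icc 1 m.I,
          m.h i * (sol u (k + 1) i - sol u k i) ^ 2
      ≤ d.energyBound T u := by
  obtain ⟨-, hpois, hsch, hbc0, hbc1, hF0, hF1⟩ := hS
  have hKpos : (0 : ℝ) < K := by exact_mod_cast hK
  have hτ : 0 < T / K := div_pos hT hKpos
  have hM : ∀ k < K, ∀ i ≤ m.I, |dPsiF m (Psi (k + 1)) i| ≤ d.gradBound := fun k hk i hi =>
    abs_dPsiF_le m _ _ d.lam_pos ha0 ha1
      (fun j h1 h2 => d.abs_charge_le (hSt Sp.P (k + 1) hk j (by omega))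
        (hSt Sp.N (k + 1) hk j (by omega)))
      (hpois k hk) (hbc0 k hk) (hbc1 k hk) hi
  have hsum := sum_range_le_of_le_sub (K := K) (f := fun k => d.epsu u / 2 * m.norm0sq (sol u k))
    fun k hk => energy_step_le m d u (Psi (k + 1)) (sol u (k + 1)) (sol u k) hτ ha0 ha1
      (hM k hk) (fun i hi => hSt u (k + 1) hk i hi) (hsch u k hk) (hbc0 k hk) (hbc1 k hk)
      (hF0 u k hk) (hF1 u k hk)
  have hinit : m.norm0sq (sol u 0) ≤ d.umax u ^ 2 :=
    m.norm0sq_le fun i _ hi => hSt u 0 (Nat.zero_le _) i (by omega)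
  have hfinal := m.norm0sq_nonneg (sol u K)
  have hε := d.epsu_nonneg heps u
  have hlhs : exp (-(3 * d.gradBound)) / 2 * ∑ k ∈ Finset.range K, ∑ i ∈ Finset.range (m.I + 1),
          T / K * (sol u (k + 1) (i + 1) - sol u (k + 1) i) ^ 2 / m.hp i
        + d.epsu u / 2 * ∑ k ∈ Finset.range K, ∑ i ∈ Finset.Icc 1 m.I,
          m.h i * (sol u (k + 1) i - sol u k i) ^ 2
      = ∑ k ∈ Finset.range K,
          (T / K * (exp (-(3 * d.gradBound)) / 2 * m.seminorm1sq (sol u (k + 1)))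
            + d.epsu u / 2 * m.norm0sq (sol u (k + 1) - sol u k)) := by
    simp only [Mesh.seminorm1sq, Mesh.norm0sq, Pi.sub_apply, Finset.sum_add_distrib,
      Finset.mul_sum, mul_div_assoc]
    congr 1
    refine Finset.sum_congr rfl fun k _ => Finset.sum_congr rfl fun i _ => by ring
  rw [hlhs]
  refine hsum.trans ?_
  rw [Data.energyBound, ← mul_assoc, mul_div_cancel₀ _ hKpos.ne']
  have hinit' := mul_le_mul_of_nonneg_left hinit (div_nonneg hε zero_le_two)
  have hfinal' := mul_nonneg (div_nonneg hε zero_le_two) hfinal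
  linarith

lemma gradient_time_le_estimateBound (d : Data) (heps : 0 ≤ d.eps) (ha0 : 0 ≤ d.alpha0)
    (ha1 : 0 ≤ d.alpha1) {T : ℝ} (hT : 0 < T) {K : ℕ} (hK : 1 ≤ K) {m : Mesh}
    {sol : Sp → ℕ → ℕ → ℝ} {Psi : ℕ → ℕ → ℝ} (hS : Scheme m d T K sol Psi)
    (hSt : Stable m d K sol) (u : Sp) :
    ((∑ k ∈ Finset.range K, ∑ i ∈ Finset.range (m.I + 1),
          T / K * (sol u (k + 1) (i + 1) - sol u (k + 1) i) ^ 2 / m.hp i)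
        + d.epsu u / 2 * ∑ k ∈ Finset.range K, ∑ i ∈ Finset.Icc 1 m.I,
          m.h i * (sol u (k + 1) i - sol u k i) ^ 2 ≤ d.estimateBound T u) ∧
      d.epsu u * (∑ k ∈ Finset.range K, ∑ i ∈ Finset.Icc 1 m.I,
          m.h i * (sol u (k + 1) i - sol u k i) ^ 2) ≤ 2 * d.estimateBound T u := by
  have hE := energy_sum_le d heps ha0 ha1 hT hK hS hSt u
  set X := ∑ k ∈ Finset.range K, ∑ i ∈ Finset.range (m.I + 1),
    T / K * (sol u (k + 1) (i + 1) - sol u (k + 1) i) ^ 2 / m.hp i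
  set Y := ∑ k ∈ Finset.range K, ∑ i ∈ Finset.Icc 1 m.I, m.h i * (sol u (k + 1) i - sol u k i) ^ 2
  have hc := exp_pos (-(3 * d.gradBound))
  have hX : 0 ≤ X := Finset.sum_nonneg fun k _ => Finset.sum_nonneg fun i hi => by
    have := m.hp_pos (Finset.mem_range_succ_iff.mp hi)
    positivity
  have hY : 0 ≤ d.epsu u / 2 * Y :=
    mul_nonneg (div_nonneg (d.epsu_nonneg heps u) zero_le_two)
      (Finset.sum_nonneg fun k _ => m.norm0sq_nonneg _)
  have hXE : X ≤ 2 / exp (-(3 * d.gradBound)) * d.energyBound T u := by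
    rw [div_mul_eq_mul_div, le_div_iff₀ hc]
    linarith
  have hC : X + d.epsu u / 2 * Y ≤ d.estimateBound T u := by
    have : 0 ≤ exp (-(3 * d.gradBound)) / 2 * X := by positivity
    rw [Data.estimateBound, add_mul, one_mul]
    linarith
  exact ⟨hC, by linarith⟩

end Corrosion

open Corrosion in
theorem discrete_gradient_time_estimate_general
    (d : Data) (heps : 0 ≤ d.eps) (ha0 : 0 < d.alpha0) (ha1 : 0 < d.alpha1)
    (T : ℝ) (hT : 0 < T) :
    ∃ C : ℝ, 0 < C ∧ ∀ (K : ℕ), 1 ≤ K → ∀ (m : Mesh)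
      (sol : Sp → ℕ → ℕ → ℝ) (Psi : ℕ → ℕ → ℝ),
      Scheme m d T K sol Psi → Stable m d K sol →
      ∀ u : Sp,
        ((∑ k ∈ Finset.range K, ∑ i ∈ Finset.range (m.I + 1),
            T / K * (sol u (k + 1) (i + 1) - sol u (k + 1) i) ^ 2 / m.hp i)
          + d.epsu u / 2 * ∑ k ∈ Finset.range K, ∑ i ∈ Finset.Icc 1 m.I,
              m.h i * (sol u (k + 1) i - sol u k i) ^ 2 ≤ C) ∧
        d.epsu u * (∑ k ∈ Finset.range K, ∑ i ∈ Finset.Icc 1 m.I,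
            m.h i * (sol u (k + 1) i - sol u k i) ^ 2) ≤ 2 * C := by
  have hP := d.estimateBound_pos heps hT Sp.P
  have hN := d.estimateBound_pos heps hT Sp.N
  refine ⟨d.estimateBound T Sp.P + d.estimateBound T Sp.N, by positivity,
    fun K hK m sol Psi hS hSt u => ?_⟩
  obtain ⟨h1, h2⟩ := gradient_time_le_estimateBound d heps ha0.le ha1.le hT hK hS hSt u
  have hCu : d.estimateBound T u ≤ d.estimateBound T Sp.P + d.estimateBound T Sp.N := by
    cases u <;> linarith
  exact ⟨h1.trans hCu, h2.trans (by linarith)⟩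

open Corrosion in
/-- combined space-gradient and time-difference estimate on the densities. -/
theorem discrete_gradient_time_estimate
    (d : Data) (heps : 0 ≤ d.eps) (ha0 : 0 < d.alpha0) (ha1 : 0 < d.alpha1) (hH : d.HypH)
    (T : ℝ) (hT : 0 < T) :
    ∃ C : ℝ, 0 < C ∧ ∀ (K : ℕ), 1 ≤ K → ∀ (m : Mesh)
      (sol : Sp → ℕ → ℕ → ℝ) (Psi : ℕ → ℕ → ℝ),
      Scheme m d T K sol Psi → Stable m d K sol →
      ∀ u : Sp,
        ((∑ k ∈ Finset.range K, ∑ i ∈ Finset.range (m.I + 1),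
            T / K * (sol u (k + 1) (i + 1) - sol u (k + 1) i) ^ 2 / m.hp i)
          + d.epsu u / 2 * ∑ k ∈ Finset.range K, ∑ i ∈ Finset.Icc 1 m.I,
              m.h i * (sol u (k + 1) i - sol u k i) ^ 2 ≤ C) ∧
        d.epsu u * (∑ k ∈ Finset.range K, ∑ i ∈ Finset.Icc 1 m.I,
            m.h i * (sol u (k + 1) i - sol u k i) ^ 2) ≤ 2 * C :=
  discrete_gradient_time_estimate_general d heps ha0 ha1 T hT
end
end

section
/- Let f : ℝ → ℝ be defined by f(x) = x·coth(x) for x ≠ 0 and f(0) = 1 (where coth(x) = cosh(x)/sinh(x)). Then f(x) ≥ 1 for all x ∈ ℝ, and f is 1-Lipschitz continuous: |f(x) − f(y)| ≤ |x − y| for all x, y ∈ ℝ. -/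
open MeasureTheory Real Filter Topology

noncomputable section

/-!
On `[0, ∞)` the function `f(x) = x coth x` has derivative `f' = (sinh x cosh x - x) / sinh² x`,
and `0 ≤ f' ≤ 1` there because `x ≤ sinh x ≤ sinh x cosh x` and
`sinh x cosh x - sinh² x = sinh x · e^{-x} = (1 - e^{-2x}) / 2 ≤ x`.
So `f` and `x - f` are both nondecreasing on `[0, ∞)`, which gives `f ≥ f 0 = 1` and
`|f a - f b| ≤ |a - b|` there; since `f` is even, `f x = f |x|` transfers both to all of `ℝ`.
Continuity at `0` comes from writing `f = cosh / dslope sinh 0`.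
-/

open Set

namespace Corrosion

lemma self_le_sinh_mul_cosh {x : ℝ} (hx : 0 ≤ x) : x ≤ sinh x * cosh x :=
  calc x ≤ sinh x := self_le_sinh_iff.mpr hx
    _ ≤ sinh x * cosh x := le_mul_of_one_le_right (sinh_nonneg_iff.mpr hx) (one_le_cosh x)

lemma sinh_mul_cosh_sub_self_le_sinh_sq (x : ℝ) : sinh x * cosh x - x ≤ sinh x ^ 2 := by
  have hexp : sinh x * cosh x - sinh x ^ 2 = (1 - exp (-(2 * x))) / 2 := by
    have hexp_add : exp x * exp (-x) = 1 := by rw [← exp_add, add_neg_cancel, exp_zero]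
    rw [show sinh x * cosh x - sinh x ^ 2 = sinh x * (cosh x - sinh x) by ring, cosh_sub_sinh,
      sinh_eq, show -(2 * x) = -x + -x by ring, exp_add]
    linear_combination hexp_add / 2
  linarith [add_one_le_exp (-(2 * x))]

def xcoth (x : ℝ) : ℝ := if x = 0 then 1 else x * coth x

@[simp]
lemma xcoth_zero : xcoth 0 = 1 := if_pos rfl

lemma xcoth_of_ne_zero {x : ℝ} (hx : x ≠ 0) : xcoth x = x * coth x := if_neg hx

@[simp]
lemma xcoth_neg (x : ℝ) : xcoth (-x) = xcoth x := by
  rcases eq_or_ne x 0 with rfl | hx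
  · simp
  · rw [xcoth_of_ne_zero hx, xcoth_of_ne_zero (neg_ne_zero.mpr hx), coth, coth, cosh_neg,
      sinh_neg, div_neg, neg_mul_neg]

lemma xcoth_abs (x : ℝ) : xcoth |x| = xcoth x := by
  rcases abs_choice x with h | h <;> simp [h]

lemma xcoth_eq_cosh_div_dslope_sinh : xcoth = fun x => cosh x / dslope sinh 0 x := by
  ext x
  rcases eq_or_ne x 0 with rfl | hx
  · simp [dslope_same]
  · rw [xcoth_of_ne_zero hx, dslope_of_ne _ hx, slope_def_field, coth]
    simp only [sinh_zero, sub_zero]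
    field_simp

lemma dslope_sinh_zero_ne_zero (x : ℝ) : dslope sinh 0 x ≠ 0 := by
  rcases eq_or_ne x 0 with rfl | hx
  · simp [dslope_same]
  · rw [dslope_of_ne _ hx, slope_def_field]
    simpa using hx

lemma continuous_dslope_sinh_zero : Continuous (dslope sinh 0) := by
  refine continuous_iff_continuousAt.mpr fun x => ?_
  rcases eq_or_ne x 0 with rfl | hx
  · exact continuousAt_dslope_same.mpr (differentiable_sinh 0)
  · exact (continuousAt_dslope_of_ne hx).mpr continuous_sinh.continuousAt

lemma continuous_xcoth : Continuous xcoth := by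
  rw [xcoth_eq_cosh_div_dslope_sinh]
  exact continuous_cosh.div continuous_dslope_sinh_zero dslope_sinh_zero_ne_zero

lemma hasDerivAt_xcoth {x : ℝ} (hx : x ≠ 0) :
    HasDerivAt xcoth ((sinh x * cosh x - x) / sinh x ^ 2) x := by
  have hs : sinh x ≠ 0 := sinh_ne_zero.mpr hx
  have hquot : HasDerivAt (fun y => y * cosh y / sinh y)
      (((1 * cosh x + x * sinh x) * sinh x - x * cosh x * cosh x) / sinh x ^ 2) x :=
    ((hasDerivAt_id' x).mul (hasDerivAt_cosh x)).div (hasDerivAt_sinh x) hs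
  have hval : ((1 * cosh x + x * sinh x) * sinh x - x * cosh x * cosh x) / sinh x ^ 2 =
      (sinh x * cosh x - x) / sinh x ^ 2 := by
    congr 1
    linear_combination (-x) * cosh_sq_sub_sinh_sq x
  rw [hval] at hquot
  refine hquot.congr_of_eventuallyEq ?_
  filter_upwards [eventually_ne_nhds hx] with y hy
  simp [xcoth_of_ne_zero hy, coth, mul_div_assoc]

lemma monotoneOn_xcoth : MonotoneOn xcoth (Ici 0) := by
  refine monotoneOn_of_hasDerivWithinAt_nonneg (convex_Ici 0) continuous_xcoth.continuousOn
    (fun x hx => (hasDerivAt_xcoth (interior_Ici.subset hx).ne').hasDerivWithinAt)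
    fun x hx => ?_
  have hx : 0 ≤ x := (interior_Ici.subset hx).le
  exact div_nonneg (sub_nonneg.mpr (self_le_sinh_mul_cosh hx)) (sq_nonneg _)

lemma monotoneOn_id_sub_xcoth : MonotoneOn (fun x => x - xcoth x) (Ici 0) := by
  refine monotoneOn_of_hasDerivWithinAt_nonneg (convex_Ici 0)
    (continuous_id.sub continuous_xcoth).continuousOn
    (fun x hx => ((hasDerivAt_id x).sub
      (hasDerivAt_xcoth (interior_Ici.subset hx).ne')).hasDerivWithinAt)
    fun x hx => ?_
  have hs : 0 < sinh x ^ 2 := pow_pos (sinh_pos_iff.mpr (interior_Ici.subset hx)) 2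
  rw [sub_nonneg, div_le_one hs]
  exact sinh_mul_cosh_sub_self_le_sinh_sq x

lemma one_le_xcoth (x : ℝ) : 1 ≤ xcoth x := by
  rw [← xcoth_abs, ← xcoth_zero]
  exact monotoneOn_xcoth self_mem_Ici (abs_nonneg x) (abs_nonneg x)

lemma abs_xcoth_sub_le_sub {a b : ℝ} (ha : 0 ≤ a) (hab : a ≤ b) :
    |xcoth b - xcoth a| ≤ b - a := by
  have hb : 0 ≤ b := ha.trans hab
  have hmono := monotoneOn_xcoth ha hb hab
  have hmono' := monotoneOn_id_sub_xcoth ha hb hab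
  rw [abs_of_nonneg (sub_nonneg.mpr hmono)]
  linarith

lemma abs_xcoth_sub_le (x y : ℝ) : |xcoth x - xcoth y| ≤ |x - y| := by
  rw [← xcoth_abs x, ← xcoth_abs y]
  refine le_trans ?_ (abs_abs_sub_abs_le_abs_sub x y)
  rcases le_total |x| |y| with h | h
  · rw [abs_sub_comm, abs_sub_comm |x|, abs_of_nonneg (sub_nonneg.mpr h)]
    exact abs_xcoth_sub_le_sub (abs_nonneg x) h
  · rw [abs_of_nonneg (sub_nonneg.mpr h)]
    exact abs_xcoth_sub_le_sub (abs_nonneg y) h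

end Corrosion

open Corrosion in
/-- `x ↦ x coth x` (extended by `1` at `0`) is `≥ 1` and 1-Lipschitz. -/
theorem xcoth_ge_one_and_lipschitz (f : ℝ → ℝ)
    (hf : ∀ x, f x = if x = 0 then 1 else x * coth x) :
    (∀ x, 1 ≤ f x) ∧ ∀ x y, |f x - f y| ≤ |x - y| := by
  obtain rfl : f = xcoth := funext hf
  exact ⟨one_le_xcoth, abs_xcoth_sub_le⟩
end
end
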